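/- The unitary multiplication operator U_μ by the identity function on L²(T, μ) is weakly l-sequentially supercyclic if and only if its adjoint U_μ* is weakly l-sequentially supercyclic; moreover if φ is a weakly l-sequentially supercyclic vector for U_μ then φ̄ is one for U_μ*. -/

import Mathlib

open MeasureTheory ComplexConjugate Filter Topology

/-- Weak convergence of a sequence in a normed space. -/
def WeaklyConvSeq {X : Type*} [NormedAddCommGroup X] [NormedSpace ℂ X]
    (u : ℕ → X) (x : X) : Prop :=
  ∀ f : StrongDual ℂ X, Tendsto (fun k => f (u k)) atTop (nhds (f x))

/-- `φ` is a weakly l-sequentially supercyclic vector for `V`: every `ψ` is the weak limit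
of a sequence `α_k • V^{n_k} φ` with a strictly increasing sequence of exponents. -/
def WLSSVector {X : Type*} [NormedAddCommGroup X] [NormedSpace ℂ X]
    (V : X →L[ℂ] X) (φ : X) : Prop :=
  ∀ ψ : X, ∃ (α : ℕ → ℂ) (n : ℕ → ℕ), StrictMono n ∧
    WeaklyConvSeq (fun k => α k • (V ^ n k) φ) ψ

/-- Abstract transfer lemma: if `C` is an antilinear involutive conjugation
intertwining `W` with its adjoint, then it maps WLSS vectors of `W` to WLSS vectors
of the adjoint of `W`. -/
lemma wlss_transfer {H : Type*} [NormedAddCommGroup H] [InnerProductSpace ℂ H]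
    [CompleteSpace H] (W : H →L[ℂ] H) (C : H → H)
    (hCs : ∀ (α : ℂ) (f : H), C (α • f) = conj α • C f)
    (hCi : ∀ f : H, C (C f) = f)
    (hCin : ∀ f g : H, (inner ℂ (C f) (C g) : ℂ) = inner ℂ g f)
    (hCW : ∀ f : H, C (W f) = (ContinuousLinearMap.adjoint W) (C f))
    (φ : H) (h : WLSSVector W φ) :
    WLSSVector (ContinuousLinearMap.adjoint W) (C φ) := by
  set W' := ContinuousLinearMap.adjoint W with hW'
  have hpow : ∀ (m : ℕ) (x : H), C ((W ^ m) x) = (W' ^ m) (C x) := by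
    intro m
    induction m with
    | zero => intro x; simp
    | succ m ih =>
      intro x
      have h1 : (W ^ (m + 1)) x = (W ^ m) (W x) := by
        rw [pow_succ]; rfl
      have h2 : (W' ^ (m + 1)) (C x) = (W' ^ m) (W' (C x)) := by
        rw [pow_succ]; rfl
      rw [h1, h2, ih (W x), hCW x]
  intro ψ
  obtain ⟨α, n, hn, hconv⟩ := h (C ψ)
  refine ⟨fun k => conj (α k), n, hn, ?_⟩
  have key : ∀ k, conj (α k) • (W' ^ n k) (C φ) = C (α k • (W ^ n k) φ) := by
    intro k
    rw [hCs, hpow]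
  intro f
  -- represent f as inner product with y
  set y := (InnerProductSpace.toDual ℂ H).symm f with hy
  have hf : ∀ x : H, f x = (inner ℂ y x : ℂ) := by
    intro x
    rw [← InnerProductSpace.toDual_apply_apply, hy, LinearIsometryEquiv.apply_symm_apply]
  have hCu : ∀ x : H, f (C x) = conj ((inner ℂ (C y) x : ℂ)) := by
    intro x
    rw [hf]
    conv_lhs => rw [← hCi y]
    rw [hCin, ← inner_conj_symm]
  have hconv' := hconv (InnerProductSpace.toDual ℂ H (C y))
  simp only [InnerProductSpace.toDual_apply_apply] at hconv'
  have hconj : Tendsto (fun k => conj ((inner ℂ (C y) (α k • (W ^ n k) φ) : ℂ)))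
      atTop (nhds (conj ((inner ℂ (C y) (C ψ) : ℂ)))) :=
    (Complex.continuous_conj.tendsto _).comp hconv'
  have hlim : conj ((inner ℂ (C y) (C ψ) : ℂ)) = f ψ := by
    rw [hCin, hf, inner_conj_symm]
  rw [← hlim]
  refine hconj.congr fun k => ?_
  show conj ((inner ℂ (C y) (α k • (W ^ n k) φ) : ℂ))
      = f (conj (α k) • (W' ^ n k) (C φ))
  rw [key k, hCu]

/-- The multiplication operator `U_μ` by the identity function on
`L²(𝕋, μ)` is weakly l-sequentially supercyclic iff its adjoint is; moreover if `φ` is a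
weakly l-sequentially supercyclic vector for `U_μ` then `φ̄` is one for `U_μ*`. -/
theorem mulOperator_WLSS_iff_adjoint_WLSS
    [MeasurableSpace Circle] [BorelSpace Circle]
    (μ : Measure Circle)
    (U : Lp ℂ 2 μ →L[ℂ] Lp ℂ 2 μ)
    (hU : ∀ ψ : Lp ℂ 2 μ, (U ψ : Circle → ℂ) =ᵐ[μ] fun γ => (γ : ℂ) * ψ γ)
    (C : Lp ℂ 2 μ → Lp ℂ 2 μ)
    (hC : ∀ ψ : Lp ℂ 2 μ, (C ψ : Circle → ℂ) =ᵐ[μ] fun γ => conj (ψ γ)) :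
    ((∃ φ, WLSSVector U φ) ↔ ∃ φ, WLSSVector (ContinuousLinearMap.adjoint U) φ) ∧
    (∀ φ, WLSSVector U φ → WLSSVector (ContinuousLinearMap.adjoint U) (C φ)) := by
  -- basic properties of the conjugation C
  have hCs : ∀ (α : ℂ) (f : Lp ℂ 2 μ), C (α • f) = conj α • C f := by
    intro α f
    apply Lp.ext
    filter_upwards [hC (α • f), Lp.coeFn_smul α f, Lp.coeFn_smul (conj α) (C f), hC f]
      with x h1 h2 h3 h4
    rw [h1, h3]
    simp only [Pi.smul_apply, smul_eq_mul, h2, h4]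
    simp [Pi.smul_apply, smul_eq_mul]
  have hCi : ∀ f : Lp ℂ 2 μ, C (C f) = f := by
    intro f
    apply Lp.ext
    filter_upwards [hC (C f), hC f] with x h1 h2
    rw [h1, h2]
    simp
  have hCin : ∀ f g : Lp ℂ 2 μ, (inner ℂ (C f) (C g) : ℂ) = inner ℂ g f := by
    intro f g
    rw [L2.inner_def, L2.inner_def]
    apply integral_congr_ae
    filter_upwards [hC f, hC g] with x h1 h2
    rw [RCLike.inner_apply, RCLike.inner_apply, h1, h2]
    simp [mul_comm]
  have hCU : ∀ f : Lp ℂ 2 μ, C (U f) = (ContinuousLinearMap.adjoint U) (C f) := by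
    intro f
    apply ext_inner_right ℂ
    intro v
    rw [ContinuousLinearMap.adjoint_inner_left]
    conv_lhs => rw [← hCi v]
    rw [hCin]
    rw [L2.inner_def, L2.inner_def]
    apply integral_congr_ae
    filter_upwards [hC v, hC f, hU f, hU v] with x h1 h2 h3 h4
    rw [RCLike.inner_apply, RCLike.inner_apply, h1, h2, h3, h4]
    simp only [RingHomCompTriple.comp_apply, RingHom.id_apply, Complex.conj_conj]
    ring
  have hCU' : ∀ f : Lp ℂ 2 μ,
      C ((ContinuousLinearMap.adjoint U) f) = U (C f) := by
    intro f
    have h1 := hCU (C f)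
    rw [hCi] at h1
    have h2 := congrArg C h1
    rw [hCi] at h2
    exact h2.symm
  have main : ∀ φ, WLSSVector U φ →
      WLSSVector (ContinuousLinearMap.adjoint U) (C φ) :=
    fun φ h => wlss_transfer U C hCs hCi hCin hCU φ h
  refine ⟨⟨fun ⟨φ, h⟩ => ⟨C φ, main φ h⟩, ?_⟩, main⟩
  rintro ⟨φ, h⟩
  refine ⟨C φ, ?_⟩
  have := wlss_transfer (ContinuousLinearMap.adjoint U) C hCs hCi hCin
    (fun f => by rw [hCU' f, ContinuousLinearMap.adjoint_adjoint]) φ h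
  rwa [ContinuousLinearMap.adjoint_adjoint] at this
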